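/- arXiv:0812.1445 — 2 statements merged into one kernel-verified Lean document; each statement's English description precedes it below -/
import Mathlib

section
/- If T is a self-adjoint (unbounded, densely defined) operator on a Hilbert space H, then for every real c > 0, the operator c + T² has dense image; in particular both T + i and T - i have dense image. -/
/-!
For non-real `z`, the identity `Im ⟪x, A x + z x⟫ = Im z ‖x‖²` (as `⟪x, A x⟫` is real) gives
`|Im z| ‖x‖ ≤ ‖A x + z x‖`. Since the graph of `A` is closed, this makes the range of `A + z`
closed; a vector orthogonal to that range lies in `Dom(A†) = Dom(A)` and satisfies
`A w + conj z • w = 0`, so the same bound forces `w = 0`. Hence `A + z` is onto, and so is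
`c + A² = (A + i√c)(A - i√c)`.
-/

open LinearPMap Set Complex

namespace IsSelfAdjoint

variable {E : Type*} [NormedAddCommGroup E] [InnerProductSpace ℂ E] [CompleteSpace E]
  {A : E →ₗ.[ℂ] E}

theorem isFormalAdjoint_self (hA : IsSelfAdjoint A) : A.IsFormalAdjoint A := by
  simpa only [isSelfAdjoint_def.mp hA] using adjoint_isFormalAdjoint hA.dense_domain (T := A)

theorem exists_apply_eq_of_inner_eq (hA : IsSelfAdjoint A) {y z : E}
    (h : ∀ x : A.domain, inner ℂ z (x : E) = inner ℂ y (A x)) :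
    ∃ hy : y ∈ A.domain, A ⟨y, hy⟩ = z := by
  have hy : y ∈ A†.domain := mem_adjoint_domain_of_exists y ⟨z, h⟩
  have hle : A† ≤ A := (isSelfAdjoint_def.mp hA).le
  exact ⟨hle.1 hy, (hle.2 rfl).symm.trans (adjoint_apply_eq hA.dense_domain ⟨y, hy⟩ h)⟩

theorem im_inner_self_apply (hA : IsSelfAdjoint A) (x : A.domain) :
    (inner ℂ (x : E) (A x)).im = 0 := by
  rw [← conj_eq_iff_im, inner_conj_symm, hA.isFormalAdjoint_self x x]

theorem abs_im_mul_norm_le (hA : IsSelfAdjoint A) (z : ℂ) (x : A.domain) :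
    |z.im| * ‖(x : E)‖ ≤ ‖A x + z • (x : E)‖ := by
  have him : (inner ℂ (x : E) (A x + z • (x : E))).im = z.im * ‖(x : E)‖ ^ 2 := by
    rw [inner_add_right, inner_smul_right, inner_self_eq_norm_sq_to_K, add_im,
      hA.im_inner_self_apply, zero_add]
    norm_cast
    exact im_mul_ofReal _ _
  rcases (norm_nonneg (x : E)).eq_or_lt with hx | hx
  · rw [← hx, mul_zero]
    exact norm_nonneg _
  refine le_of_mul_le_mul_right ?_ hx
  calc |z.im| * ‖(x : E)‖ * ‖(x : E)‖ = |(inner ℂ (x : E) (A x + z • (x : E))).im| := by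
        rw [him, abs_mul, abs_of_nonneg (sq_nonneg ‖(x : E)‖), sq, mul_assoc]
    _ ≤ ‖inner ℂ (x : E) (A x + z • (x : E))‖ := abs_im_le_norm _
    _ ≤ ‖(x : E)‖ * ‖A x + z • (x : E)‖ := norm_inner_le_norm _ _
    _ = ‖A x + z • (x : E)‖ * ‖(x : E)‖ := mul_comm _ _

theorem isClosed_range_add_smul (hA : IsSelfAdjoint A) {z : ℂ} (hz : z.im ≠ 0) :
    _root_.IsClosed (range fun x : A.domain => A x + z • (x : E)) := by
  -- The range is the image of the complete space `graph A` under `(x, y) ↦ y + z • x`,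
  -- a map that is bounded below on the graph.
  have : CompleteSpace A.graph := hA.isClosed.completeSpace_coe
  let Φ : A.graph →L[ℂ] E :=
    (ContinuousLinearMap.snd ℂ E E + z • ContinuousLinearMap.fst ℂ E E).comp A.graph.subtypeL
  have hrange : range Φ = range fun x : A.domain => A x + z • (x : E) := by
    ext y
    constructor
    · rintro ⟨⟨⟨_, _⟩, hp⟩, rfl⟩
      obtain ⟨x, rfl, rfl⟩ := A.mem_graph_iff.mp hp
      exact ⟨x, rfl⟩
    · rintro ⟨x, rfl⟩
      exact ⟨⟨_, A.mem_graph x⟩, rfl⟩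
  have hbound : ∀ p, ‖p‖ ≤ (1 + (1 + ‖z‖₊) / ‖z.im‖₊ : NNReal) * ‖Φ p‖ := by
    rintro ⟨⟨_, _⟩, hp⟩
    obtain ⟨x, rfl, rfl⟩ := A.mem_graph_iff.mp hp
    set w := ‖A x + z • (x : E)‖
    have hw : 0 ≤ w := norm_nonneg _
    have hx : ‖(x : E)‖ ≤ w / |z.im| := by
      rw [le_div_iff₀' (abs_pos.mpr hz)]
      exact hA.abs_im_mul_norm_le z x
    have hAx : ‖A x‖ ≤ w + ‖z‖ * ‖(x : E)‖ := by
      calc ‖A x‖ = ‖(A x + z • (x : E)) - z • (x : E)‖ := by rw [add_sub_cancel_right]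
        _ ≤ w + ‖z • (x : E)‖ := norm_sub_le _ _
        _ = w + ‖z‖ * ‖(x : E)‖ := by rw [norm_smul]
    have hK : ((1 + (1 + ‖z‖₊) / ‖z.im‖₊ : NNReal) : ℝ) * w
        = w + w / |z.im| + ‖z‖ * (w / |z.im|) := by
      push_cast
      rw [Real.norm_eq_abs]
      ring
    have hu : 0 ≤ w / |z.im| := by positivity
    have hzu : 0 ≤ ‖z‖ * (w / |z.im|) := by positivity
    have hzx := mul_le_mul_of_nonneg_left hx (norm_nonneg z)
    change ‖((x : E), A x)‖ ≤ _ * w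
    rw [hK]
    simp only [norm_prod_le_iff]
    exact ⟨by linarith, by linarith⟩
  rw [← hrange]
  exact (Φ.antilipschitz_of_bound hbound).isClosed_range Φ.uniformContinuous

theorem range_add_smul_eq_univ (hA : IsSelfAdjoint A) {z : ℂ} (hz : z.im ≠ 0) :
    range (fun x : A.domain => A x + z • (x : E)) = univ := by
  let L : A.domain →ₗ[ℂ] E := A.toFun + z • A.domain.subtype
  have hL : (LinearMap.range L : Set E) = range fun x : A.domain => A x + z • (x : E) :=
    LinearMap.coe_range L
  have horth : (LinearMap.range L)ᗮ = ⊥ := by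
    refine (Submodule.eq_bot_iff _).2 fun w hw => ?_
    have h : ∀ x : A.domain, inner ℂ (-(starRingEnd ℂ z) • w) (x : E) = inner ℂ w (A x) := by
      intro x
      have hx : inner ℂ w (A x + z • (x : E)) = 0 :=
        (Submodule.mem_orthogonal' _ w).1 hw _ ⟨x, rfl⟩
      rw [inner_add_right, inner_smul_right] at hx
      rw [inner_smul_left, _root_.map_neg, conj_conj]
      linear_combination -hx
    obtain ⟨hw, hAw⟩ := hA.exists_apply_eq_of_inner_eq h
    have hbound := hA.abs_im_mul_norm_le (starRingEnd ℂ z) ⟨w, hw⟩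
    rw [hAw, neg_smul, neg_add_cancel, norm_zero, conj_im, abs_neg] at hbound
    exact norm_le_zero_iff.1 (nonpos_of_mul_nonpos_right hbound (abs_pos.2 hz))
  have hclosed : _root_.IsClosed (LinearMap.range L : Set E) :=
    hL ▸ hA.isClosed_range_add_smul hz
  rw [← hL, ← hclosed.submodule_topologicalClosure_eq,
    Submodule.topologicalClosure_eq_top_iff.2 horth, Submodule.top_coe]

theorem exists_smul_add_apply_apply_eq (hA : IsSelfAdjoint A) {c : ℝ} (hc : 0 < c) (y : E) :
    ∃ (x : A.domain) (h : A x ∈ A.domain), (c : ℂ) • (x : E) + A ⟨A x, h⟩ = y := by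
  set z : ℂ := Real.sqrt c * I
  have hz : z.im ≠ 0 := by simpa [z] using (Real.sqrt_pos.2 hc).ne'
  have hz2 : z ^ 2 = -c := by
    rw [mul_pow, I_sq, ← ofReal_pow, Real.sq_sqrt hc.le, mul_neg_one]
  obtain ⟨u, hu⟩ : y ∈ range fun x : A.domain => A x + z • (x : E) := by
    rw [hA.range_add_smul_eq_univ hz]
    trivial
  obtain ⟨x, hx⟩ : (u : E) ∈ range fun x : A.domain => A x + (-z) • (x : E) := by
    rw [hA.range_add_smul_eq_univ (by simpa using hz)]
    trivial
  have hAx : A x = u + z • (x : E) := by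
    rw [← hx]
    module
  have hmem : A x ∈ A.domain := hAx ▸ add_mem u.2 (A.domain.smul_mem z x.2)
  refine ⟨x, hmem, ?_⟩
  have hAx' : (⟨A x, hmem⟩ : A.domain) = u + z • x := Subtype.ext hAx
  rw [hAx', A.map_add, A.map_smul]
  linear_combination (norm := module) hu + z • hAx + hz2 • (x : E)

end IsSelfAdjoint

theorem stmt_0_general {H : Type*} [NormedAddCommGroup H] [InnerProductSpace ℂ H] [CompleteSpace H]
    (T : H →ₗ.[ℂ] H) (hT : IsSelfAdjoint T) :
    (∀ c : ℝ, 0 < c →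
      Dense {y : H | ∃ (σ : T.domain) (h : T σ ∈ T.domain),
        (c : ℂ) • (σ : H) + T ⟨T σ, h⟩ = y}) ∧
    Dense (Set.range fun σ : T.domain => T σ + Complex.I • (σ : H)) ∧
    Dense (Set.range fun σ : T.domain => T σ - Complex.I • (σ : H)) := by
  refine ⟨fun c hc => dense_univ.mono fun y _ => hT.exists_smul_add_apply_apply_eq hc y, ?_, ?_⟩
  · rw [hT.range_add_smul_eq_univ (z := I) (by simp)]
    exact dense_univ
  · have hsurj := hT.range_add_smul_eq_univ (z := -I) (by simp)
    simp only [neg_smul, ← sub_eq_add_neg] at hsurj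
    rw [hsurj]
    exact dense_univ

/-- If `T` is a densely defined self-adjoint operator on a complex Hilbert space `H`,
then for every real `c > 0` the operator `c + T²` (defined on `Dom(T²)`) has dense image;
in particular both `T + i` and `T - i` have dense image. -/
theorem stmt_0 {H : Type*} [NormedAddCommGroup H] [InnerProductSpace ℂ H] [CompleteSpace H]
    (T : H →ₗ.[ℂ] H) (hdense : Dense (T.domain : Set H)) (hT : IsSelfAdjoint T) :
    (∀ c : ℝ, 0 < c →
      Dense {y : H | ∃ (σ : T.domain) (h : T σ ∈ T.domain),
        (c : ℂ) • (σ : H) + T ⟨T σ, h⟩ = y}) ∧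
    Dense (Set.range fun σ : T.domain => T σ + Complex.I • (σ : H)) ∧
    Dense (Set.range fun σ : T.domain => T σ - Complex.I • (σ : H)) :=
  stmt_0_general T hT
end

section
/- Let T be a self-adjoint operator on a Hilbert space with bounded inverse (i.e., T is bijective from its domain onto H with bounded inverse). Then the family U(s) = (T - si)(T + si)⁻¹, for s ∈ [0,1], is a norm-continuous path of bounded operators connecting the identity U(0) = 1 to the Cayley transform U(1) of T. -/
/-!
`B = T⁻¹` inherits the symmetry of `T`, so it is a bounded self-adjoint operator; its spectrum
is real and `1 + s i B` is invertible for every real `s`. Since `σ = B (T σ)`, we have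
`(T ± s i) σ = (1 ± s i B) (T σ)`, so `U(s) = (1 - s i B)(1 + s i B)⁻¹`, which depends
norm-continuously on `s` because inversion is continuous on the units of a Banach algebra.
-/

open Complex Ring

theorem IsSelfAdjoint.isFormalAdjoint_self_s6 {𝕜 E : Type*} [RCLike 𝕜] [NormedAddCommGroup E]
    [InnerProductSpace 𝕜 E] [CompleteSpace E] {T : E →ₗ.[𝕜] E} (hT : IsSelfAdjoint T) :
    T.IsFormalAdjoint T := by
  simpa only [LinearPMap.isSelfAdjoint_def.mp hT] using
    LinearPMap.adjoint_isFormalAdjoint hT.dense_domain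

theorem LinearPMap.IsFormalAdjoint.isSymmetric_of_rightInverse {𝕜 E : Type*} [RCLike 𝕜]
    [NormedAddCommGroup E] [InnerProductSpace 𝕜 E] {T : E →ₗ.[𝕜] E} (hT : T.IsFormalAdjoint T)
    {B : E →ₗ[𝕜] E} (hBmem : ∀ x, B x ∈ T.domain) (hB : ∀ x, T ⟨B x, hBmem x⟩ = x) :
    B.IsSymmetric := fun x y => by
  simpa only [hB] using (hT ⟨B x, hBmem x⟩ ⟨B y, hBmem y⟩).symm

theorem IsSelfAdjoint.isUnit_algebraMap_sub {A : Type*} [CStarAlgebra A] {a : A}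
    (ha : IsSelfAdjoint a) {z : ℂ} (hz : z.im ≠ 0) : IsUnit (algebraMap ℂ A z - a) :=
  spectrum.notMem_iff.mp fun h => hz (ha.im_eq_zero_of_mem_spectrum h)

theorem IsSelfAdjoint.isUnit_one_add_ofReal_mul_I_smul {A : Type*} [CStarAlgebra A] {a : A}
    (ha : IsSelfAdjoint a) (s : ℝ) : IsUnit (1 + (s * I) • a) := by
  rcases eq_or_ne s 0 with rfl | hs
  · simp
  have hc : (s : ℂ) * I ≠ 0 := by simpa using hs
  -- `-(s i)⁻¹ = i / s` is not real, hence not in the spectrum of `a`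
  have key : 1 + (s * I) • a = (-(s * I)) • (algebraMap ℂ A (-(s * I)⁻¹) - a) := by
    rw [Algebra.algebraMap_eq_smul_one, smul_sub, smul_smul, neg_mul_neg, mul_inv_cancel₀ hc,
      one_smul, neg_smul, sub_neg_eq_add]
  rw [key, Algebra.smul_def]
  refine ((neg_ne_zero.mpr hc).isUnit.map _).mul (ha.isUnit_algebraMap_sub ?_)
  simpa using hs

theorem ContinuousAt.ringInverse {X R : Type*} [TopologicalSpace X] [NormedRing R]
    [HasSummableGeomSeries R] {f : X → R} {x : X} (hf : ContinuousAt f x) (hx : IsUnit (f x)) :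
    ContinuousAt (fun y => (f y)⁻¹ʳ) x := by
  obtain ⟨u, hu⟩ := hx
  exact (hu ▸ NormedRing.inverse_continuousAt u).comp hf

/-- `(1 - s i b)(1 + s i b)⁻¹`; for `b = T⁻¹` this is `(T - s i)(T + s i)⁻¹`. -/
noncomputable def cayleyPath {A : Type*} [Ring A] [Module ℂ A] (b : A) (s : ℝ) : A :=
  (1 - (s * I) • b) * (1 + (s * I) • b)⁻¹ʳ

@[simp]
theorem cayleyPath_zero {A : Type*} [Ring A] [Module ℂ A] (b : A) : cayleyPath b 0 = 1 := by
  simp [cayleyPath]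

namespace IsSelfAdjoint

variable {A : Type*} [CStarAlgebra A] {a : A}

theorem continuous_cayleyPath (ha : IsSelfAdjoint a) : Continuous (cayleyPath a) :=
  continuous_iff_continuousAt.mpr fun s =>
    (by fun_prop : Continuous fun t : ℝ => 1 - (t * I) • a).continuousAt.mul
      ((by fun_prop : Continuous fun t : ℝ => 1 + (t * I) • a).continuousAt.ringInverse
        (ha.isUnit_one_add_ofReal_mul_I_smul s))

theorem cayleyPath_mul_one_add (ha : IsSelfAdjoint a) (s : ℝ) :
    cayleyPath a s * (1 + (s * I) • a) = 1 - (s * I) • a := by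
  rw [cayleyPath, mul_assoc, inverse_mul_cancel _ (ha.isUnit_one_add_ofReal_mul_I_smul s), mul_one]

end IsSelfAdjoint

theorem stmt_6_general {H : Type*} [NormedAddCommGroup H] [InnerProductSpace ℂ H] [CompleteSpace H]
    (T : H →ₗ.[ℂ] H) (hT : IsSelfAdjoint T)
    (B : H →L[ℂ] H) (hBmem : ∀ x : H, B x ∈ T.domain)
    (hB₁ : ∀ x : H, T ⟨B x, hBmem x⟩ = x) (hB₂ : ∀ σ : T.domain, B (T σ) = σ) :
    ∃ U : ℝ → H →L[ℂ] H,
      ContinuousOn U (Set.Icc 0 1) ∧ U 0 = 1 ∧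
      ∀ s ∈ Set.Icc (0 : ℝ) 1, ∀ σ : T.domain,
        U s (T σ + ((s : ℂ) * Complex.I) • (σ : H)) =
          T σ - ((s : ℂ) * Complex.I) • (σ : H) := by
  have hB : IsSelfAdjoint B := ContinuousLinearMap.isSelfAdjoint_iff_isSymmetric.mpr
    (hT.isFormalAdjoint_self_s6.isSymmetric_of_rightInverse hBmem hB₁)
  refine ⟨cayleyPath B, hB.continuous_cayleyPath.continuousOn, cayleyPath_zero B, fun s _ σ => ?_⟩
  have h := congr($(hB.cayleyPath_mul_one_add s) (T σ))
  simpa only [mul_apply_eq_comp, ContinuousLinearMap.comp_apply, add_apply, sub_apply,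
    smul_apply, one_apply_eq_self, hB₂] using h

/-- If `T` is a densely defined self-adjoint operator with bounded inverse `B`, then the
Cayley transforms `U(s) = (T - si)(T + si)⁻¹`, `s ∈ [0,1]`, form a norm-continuous path of
bounded operators from the identity `U(0) = 1` to the Cayley transform `U(1)` of `T`;
here `U(s)` is characterized by `U(s)((T + si)σ) = (T - si)σ` for all `σ ∈ Dom T`. -/
theorem stmt_6 {H : Type*} [NormedAddCommGroup H] [InnerProductSpace ℂ H] [CompleteSpace H]
    (T : H →ₗ.[ℂ] H) (hdense : Dense (T.domain : Set H)) (hT : IsSelfAdjoint T)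
    (B : H →L[ℂ] H) (hBmem : ∀ x : H, B x ∈ T.domain)
    (hB₁ : ∀ x : H, T ⟨B x, hBmem x⟩ = x) (hB₂ : ∀ σ : T.domain, B (T σ) = σ) :
    ∃ U : ℝ → H →L[ℂ] H,
      ContinuousOn U (Set.Icc 0 1) ∧ U 0 = 1 ∧
      ∀ s ∈ Set.Icc (0 : ℝ) 1, ∀ σ : T.domain,
        U s (T σ + ((s : ℂ) * Complex.I) • (σ : H)) =
          T σ - ((s : ℂ) * Complex.I) • (σ : H) :=
  stmt_6_general T hT B hBmem hB₁ hB₂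
end
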